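/- arXiv:1010.1666 — 3 statements merged into one kernel-verified Lean document; each statement's English description precedes it below -/
import Mathlib

section
/- Let (X,⟨·,·⟩) be a real inner product space with norm ‖·‖. Then for all x,y ∈ X and every integer N ≥ 1, ‖x‖^{2N} + ‖y‖^{2N} − 2(⟨x,y⟩)^N ≤ 2^{N+1}(‖x‖+‖y‖)^{2(N−1)}‖x−y‖². -/
/-!
Write `a = ‖x‖`, `b = ‖y‖`, `t = ⟪x, y⟫` and `D = ‖x - y‖² = a² + b² - 2t`. Then
`a^{2N} + b^{2N} - 2t^N = (a^N - b^N)² + 2((ab)^N - t^N)`, and both differences of `N`-th powers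
are controlled by the mean value bound `|p^N - q^N| ≤ N C^{N-1} |p - q|` for `|p|, |q| ≤ C`:
with `C = a + b` for the first and `C = (a + b)²` for the second (Cauchy–Schwarz gives `|t| ≤ ab`).
Since `(a - b)² ≤ D` and `2(ab - t) ≤ D`, the left side is at most `(N² + N)(a + b)^{2(N-1)} D`,
and `N² + N ≤ 2^{N+1}`.
-/

lemma sq_add_self_le_two_pow_succ (n : ℕ) : n ^ 2 + n ≤ 2 ^ (n + 1) := by
  induction n with
  | zero => norm_num
  | succ n ih =>
    have hn := n.lt_two_pow_self
    rw [pow_succ 2 (n + 1), pow_succ 2 n] at *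
    nlinarith

lemma abs_pow_sub_pow_le_of_abs_le {R : Type*} [CommRing R] [LinearOrder R] [IsOrderedRing R]
    {p q C : R} (hp : |p| ≤ C) (hq : |q| ≤ C) (n : ℕ) :
    |p ^ n - q ^ n| ≤ n * C ^ (n - 1) * |p - q| := by
  calc |p ^ n - q ^ n| ≤ |p - q| * n * max |p| |q| ^ (n - 1) := abs_pow_sub_pow_le ..
    _ ≤ |p - q| * n * C ^ (n - 1) := by gcongr; exact max_le hp hq
    _ = n * C ^ (n - 1) * |p - q| := by ring

lemma pow_two_mul_add_pow_two_mul_sub_le {a b t : ℝ} (ha : 0 ≤ a) (hb : 0 ≤ b)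
    (ht : |t| ≤ a * b) (N : ℕ) :
    a ^ (2 * N) + b ^ (2 * N) - 2 * t ^ N
      ≤ 2 ^ (N + 1) * (a + b) ^ (2 * (N - 1)) * (a ^ 2 + b ^ 2 - 2 * t) := by
  set S := (a + b) ^ (2 * (N - 1))
  have hdiff : (a ^ N - b ^ N) ^ 2 ≤ N ^ 2 * S * (a - b) ^ 2 := by
    have h := abs_pow_sub_pow_le_of_abs_le (C := a + b) (by rw [abs_of_nonneg ha]; linarith)
      (by rw [abs_of_nonneg hb]; linarith) N
    calc (a ^ N - b ^ N) ^ 2 = |a ^ N - b ^ N| ^ 2 := (sq_abs _).symm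
      _ ≤ (N * (a + b) ^ (N - 1) * |a - b|) ^ 2 := by gcongr
      _ = N ^ 2 * S * (a - b) ^ 2 := by rw [mul_pow, mul_pow, sq_abs, ← pow_mul, mul_comm (N - 1)]
  have hprod : (a * b) ^ N - t ^ N ≤ N * S * (a * b - t) := by
    have hab : |a * b| ≤ (a + b) ^ 2 := by
      rw [abs_of_nonneg (by positivity)]; nlinarith
    have h := abs_pow_sub_pow_le_of_abs_le hab (ht.trans (le_abs_self _ |>.trans hab)) N
    rw [← pow_mul, abs_of_nonneg (a := a * b - t) (by linarith [le_abs_self t])] at h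
    exact (le_abs_self _).trans h
  have hsq : (a - b) ^ 2 ≤ a ^ 2 + b ^ 2 - 2 * t := by nlinarith [le_abs_self t]
  have hcross : 2 * (a * b - t) ≤ a ^ 2 + b ^ 2 - 2 * t := by nlinarith [sq_nonneg (a - b)]
  have hN : ((N : ℝ) ^ 2 + N) ≤ 2 ^ (N + 1) := by exact_mod_cast sq_add_self_le_two_pow_succ N
  calc a ^ (2 * N) + b ^ (2 * N) - 2 * t ^ N
      = (a ^ N - b ^ N) ^ 2 + 2 * ((a * b) ^ N - t ^ N) := by rw [pow_mul', pow_mul', mul_pow]; ring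
    _ ≤ N ^ 2 * S * (a - b) ^ 2 + N * S * (2 * (a * b - t)) := by linarith
    _ ≤ (N ^ 2 + N) * S * (a ^ 2 + b ^ 2 - 2 * t) := by
      rw [add_mul, add_mul]; gcongr
    _ ≤ 2 ^ (N + 1) * S * (a ^ 2 + b ^ 2 - 2 * t) := by
      gcongr; linarith [sq_nonneg (a - b)]

theorem stmt3_general {X : Type*} [NormedAddCommGroup X] [InnerProductSpace ℝ X]
    (x y : X) (N : ℕ) :
    ‖x‖ ^ (2 * N) + ‖y‖ ^ (2 * N) - 2 * (inner ℝ x y : ℝ) ^ N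
      ≤ 2 ^ (N + 1) * (‖x‖ + ‖y‖) ^ (2 * (N - 1)) * ‖x - y‖ ^ 2 := by
  rw [norm_sub_sq_real, sub_add_eq_add_sub]
  exact pow_two_mul_add_pow_two_mul_sub_le (norm_nonneg x) (norm_nonneg y)
    (abs_real_inner_le_norm x y) N

/-- For a real inner product space `X`, all `x, y ∈ X` and every integer `N ≥ 1`:
`‖x‖^{2N} + ‖y‖^{2N} − 2⟨x,y⟩^N ≤ 2^{N+1}(‖x‖+‖y‖)^{2(N−1)}‖x−y‖²`. -/
theorem stmt3 {X : Type*} [NormedAddCommGroup X] [InnerProductSpace ℝ X]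
    (x y : X) (N : ℕ) (hN : 1 ≤ N) :
    ‖x‖ ^ (2 * N) + ‖y‖ ^ (2 * N) - 2 * (inner ℝ x y : ℝ) ^ N
      ≤ 2 ^ (N + 1) * (‖x‖ + ‖y‖) ^ (2 * (N - 1)) * ‖x - y‖ ^ 2 :=
  stmt3_general x y N
end

section
/- Let U^{k,n} solve the recursive Wick difference system U^{k,n}_l = U^{k,n}_{l−1} + k U^{k−1,n}_{l−1} ⋄ₙ (B^{H,n}_{l/n} − B^{H,n}_{(l−1)/n}), U^{0,n}_l = 1, U^{k,n}_0 = 0. Then (1/k!)U^{k,n}_l = Σ_{C⊆{1,…,l}, |C|=k} (Σ_{m:C→{1,…,l} injective} ∏_{p∈C} d^n_{m(p),p}) Ξ^n_C, where d^n_{l,i} := b^n_{l/n,i} − b^n_{(l−1)/n,i}. -/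
open Finset
open scoped Classical

/-- The discrete Wick product on Walsh coefficients:
`(x ⋄ₙ y)_C = Σ_{A∪B=C, A∩B=∅} x_A y_B`. -/
noncomputable def wickProd {n : ℕ} (x y : Finset (Fin n) → ℝ) : Finset (Fin n) → ℝ :=
  fun C => ∑ A : Finset (Fin n), ∑ B : Finset (Fin n),
    if A ∪ B = C ∧ Disjoint A B then x A * y B else 0

/-- Walsh coefficients of the increment `B^{H,n}_{l/n} − B^{H,n}_{(l−1)/n} = Σ_i d^n_{l,i} ξ_i`. -/
noncomputable def deltaC {n : ℕ} (d : ℕ → Fin n → ℝ) (l : ℕ) : Finset (Fin n) → ℝ :=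
  fun C => ∑ i : Fin n, if C = {i} then d l i else 0

/-- Walsh coefficients of the solution `U^{k,n}_l` of the recursive Wick difference system
`U^{k,n}_l = U^{k,n}_{l−1} + k U^{k−1,n}_{l−1} ⋄ₙ (B^{H,n}_{l/n} − B^{H,n}_{(l−1)/n})`,
`U^{0,n}_l = 1`, `U^{k,n}_0 = 0`.  Here `Ueuler d l k` is `U^{k,n}_l`. -/
noncomputable def Ueuler {n : ℕ} (d : ℕ → Fin n → ℝ) : ℕ → ℕ → Finset (Fin n) → ℝ
  | 0 => fun k C => if k = 0 then (if C = ∅ then 1 else 0) else 0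
  | l + 1 => fun k C =>
      match k with
      | 0 => if C = ∅ then 1 else 0
      | k + 1 =>
          Ueuler d l (k + 1) C +
            ((k : ℝ) + 1) * wickProd (Ueuler d l k) (deltaC d (l + 1)) C

/-!
Write `T_l(C)` for the sum, over injections `m : C → {1, …, l}`, of `∏_{p ∈ C} d (m p) p`.
Sorting the injections into `{1, …, l + 1}` by the point of `C` (if any) sent to `l + 1` gives
`T_{l+1}(C) = T_l(C) + ∑_{i ∈ C} d (l + 1) i · T_l(C \ {i})`. On the other hand, Wick
multiplication by the first-chaos increment `∑_i d (l + 1) i ξ_i` removes one index: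
`(x ⋄ Δ)_C = ∑_{i ∈ C} x_{C \ {i}} d (l + 1) i`. So `U^k_l(C)` and `k! [#C = k] T_l(C)` obey the
same recursion. The constraint `i < l` costs nothing: since `d r i = 0` for `r ≤ i`, `T_l(C)`
vanishes as soon as `C` contains an index `i ≥ l`.
-/

theorem Finset.prod_attach_of_subset {ι M : Type*} [CommMonoid M] {C D : Finset ι} (h : D ⊆ C)
    (f : (p : ι) → p ∈ C → M) :
    ∏ p ∈ D.attach, f p.1 (h p.2) = ∏ p ∈ D, if hp : p ∈ C then f p hp else 1 := by
  rw [← Finset.prod_attach D]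
  exact Finset.prod_congr rfl fun p _ => by rw [dif_pos (h p.2)]

section InjectionSum

variable {ι α R : Type*} [DecidableEq ι] [DecidableEq α] [CommSemiring R]

noncomputable def injectionTerm (w : α → ι → R) (C : Finset ι) (m : (p : ι) → p ∈ C → α) :
    R :=
  if (∀ (p : ι) (hp : p ∈ C) (q : ι) (hq : q ∈ C), m p hp = m q hq → p = q)
  then ∏ p ∈ C.attach, w (m p.1 p.2) p.1 else 0

noncomputable def injectionSum (w : α → ι → R) (s : Finset α) (C : Finset ι) : R :=
  ∑ m ∈ C.pi (fun _ => s), injectionTerm w C m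

theorem injectionSum_empty (w : α → ι → R) (s : Finset α) : injectionSum w s ∅ = 1 := by
  simp [injectionSum, injectionTerm]

theorem injectionSum_eq_zero_of_mem {w : α → ι → R} {s : Finset α} {C : Finset ι} {p : ι}
    (hp : p ∈ C) (hw : ∀ a ∈ s, w a p = 0) : injectionSum w s C = 0 := by
  refine Finset.sum_eq_zero fun m hm => ?_
  unfold injectionTerm
  split_ifs
  · exact Finset.prod_eq_zero (Finset.mem_attach _ ⟨p, hp⟩) (hw _ (Finset.mem_pi.1 hm p hp))
  · rfl

theorem injectionTerm_eq_mul_erase (w : α → ι → R) {s : Finset α} {a : α} (ha : a ∉ s)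
    {C : Finset ι} {i : ι} (hi : i ∈ C) (m : (p : ι) → p ∈ C → α) (hmi : m i hi = a)
    (hms : ∀ (p : ι) (hp : p ∈ C), p ≠ i → m p hp ∈ s) :
    injectionTerm w C m
      = w a i * injectionTerm w (C.erase i) (fun p hp => m p (Finset.mem_of_mem_erase hp)) := by
  have hval : ∀ (p : ι) (hp : p ∈ C), m p hp = a ↔ p = i := fun p hp =>
    ⟨fun h => by_contra fun hne => ha (h ▸ hms p hp hne), fun h => h ▸ hmi⟩
  unfold injectionTerm
  by_cases hinj : ∀ (p : ι) (hp : p ∈ C) (q : ι) (hq : q ∈ C), m p hp = m q hq → p = q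
  · have hC := Finset.prod_attach_of_subset (subset_refl C) fun p hp => w (m p hp) p
    have hCi :=
      Finset.prod_attach_of_subset (Finset.erase_subset i C) fun p hp => w (m p hp) p
    beta_reduce at hC hCi
    rw [if_pos hinj, if_pos fun p hp q hq => hinj p _ q _, hC, hCi,
      ← Finset.mul_prod_erase C _ hi, dif_pos hi, hmi]
  · rw [if_neg hinj, if_neg, mul_zero]
    refine fun hinj' => hinj fun p hp q hq hpq => ?_
    by_cases hp' : p = i <;> by_cases hq' : q = i
    · rw [hp', hq']
    · exact absurd ((hval q hq).1 (hpq ▸ (hval p hp).2 hp')) hq'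
    · exact absurd ((hval p hp).1 (hpq.symm ▸ (hval q hq).2 hq')) hp'
    · exact hinj' p (Finset.mem_erase.2 ⟨hp', hp⟩) q (Finset.mem_erase.2 ⟨hq', hq⟩) hpq

theorem injectionTerm_eq_add_sum (w : α → ι → R) {s : Finset α} {a : α} (ha : a ∉ s)
    {C : Finset ι} (m : (p : ι) → p ∈ C → α) (hm : m ∈ C.pi fun _ => insert a s) :
    injectionTerm w C m
      = (if ∀ (p : ι) (hp : p ∈ C), m p hp ∈ s then injectionTerm w C m else 0)
        + ∑ i ∈ C.attach, if m i.1 i.2 = a ∧ ∀ (p : ι) (hp : p ∈ C), p ≠ i.1 → m p hp ∈ s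
            then injectionTerm w C m else 0 := by
  by_cases hinj : ∀ (p : ι) (hp : p ∈ C) (q : ι) (hq : q ∈ C), m p hp = m q hq → p = q
  swap
  · simp [injectionTerm, hinj]
  have hms : ∀ (p : ι) (hp : p ∈ C), m p hp ≠ a → m p hp ∈ s := fun p hp hne =>
    (Finset.mem_insert.1 (Finset.mem_pi.1 hm p hp)).resolve_left hne
  by_cases hs : ∀ (p : ι) (hp : p ∈ C), m p hp ∈ s
  · rw [if_pos hs, Finset.sum_eq_zero, add_zero]
    exact fun i _ => if_neg fun ⟨hia, _⟩ => ha (hia ▸ hs i.1 i.2)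
  · push Not at hs
    obtain ⟨p₀, hp₀, hp₀s⟩ := hs
    have hmp₀ : m p₀ hp₀ = a := by_contra fun hne => hp₀s (hms p₀ hp₀ hne)
    rw [if_neg (fun h => hp₀s (h p₀ hp₀)), zero_add, Finset.sum_eq_single ⟨p₀, hp₀⟩]
    · refine (if_pos ⟨hmp₀, fun p hp hne => hms p hp fun h => hne ?_⟩).symm
      exact hinj p hp p₀ hp₀ (h.trans hmp₀.symm)
    · exact fun i _ hne => if_neg fun h =>
        hne (Subtype.ext (hinj i.1 i.2 p₀ hp₀ (h.1.trans hmp₀.symm)))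
    · exact fun h => (h (Finset.mem_attach _ _)).elim

theorem sum_pi_insert_ite_eq_mul (w : α → ι → R) {s : Finset α} {a : α} (ha : a ∉ s)
    {C : Finset ι} {i : ι} (hi : i ∈ C) :
    ∑ m ∈ C.pi (fun _ => insert a s),
        (if m i hi = a ∧ ∀ (p : ι) (hp : p ∈ C), p ≠ i → m p hp ∈ s
          then injectionTerm w C m else 0)
      = w a i * injectionSum w s (C.erase i) := by
  rw [← Finset.sum_filter, injectionSum, Finset.mul_sum]
  refine Finset.sum_bij' (fun m _ p hp => m p (Finset.mem_of_mem_erase hp))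
    (fun m' _ p hp => if h : p = i then a else m' p (Finset.mem_erase.2 ⟨h, hp⟩))
    ?_ ?_ ?_ ?_ ?_
  · intro m hm
    simp only [Finset.mem_filter, Finset.mem_pi] at hm ⊢
    exact fun p hp => hm.2.2 p _ (Finset.ne_of_mem_erase hp)
  · intro m' hm'
    simp only [Finset.mem_filter, Finset.mem_pi] at hm' ⊢
    refine ⟨fun p hp => ?_, by simp, fun p hp hne => by simpa [hne] using hm' p _⟩
    split_ifs with h
    · exact Finset.mem_insert_self a s
    · exact Finset.mem_insert_of_mem (hm' p _)
  · intro m hm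
    funext p hp
    split_ifs with h
    · subst h
      exact (Finset.mem_filter.1 hm).2.1.symm
    · rfl
  · intro m' _
    funext p hp
    exact dif_neg (Finset.ne_of_mem_erase hp)
  · intro m hm
    obtain ⟨-, hmi, hms⟩ := Finset.mem_filter.1 hm
    exact injectionTerm_eq_mul_erase w ha hi m hmi hms

theorem injectionSum_insert (w : α → ι → R) {s : Finset α} {a : α} (ha : a ∉ s)
    (C : Finset ι) :
    injectionSum w (insert a s) C
      = injectionSum w s C + ∑ i ∈ C, w a i * injectionSum w s (C.erase i) := by
  have hpi : (C.pi fun _ => insert a s).filter (fun m => ∀ (p : ι) (hp : p ∈ C), m p hp ∈ s)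
      = C.pi fun _ => s := by
    ext m
    simp only [Finset.mem_filter, Finset.mem_pi]
    exact ⟨fun h => h.2, fun h => ⟨fun p hp => Finset.mem_insert_of_mem (h p hp), h⟩⟩
  rw [injectionSum, Finset.sum_congr rfl fun m hm => injectionTerm_eq_add_sum w ha m hm,
    Finset.sum_add_distrib, ← Finset.sum_filter, hpi, Finset.sum_comm,
    ← Finset.sum_attach C fun i => w a i * injectionSum w s (C.erase i)]
  exact congrArg _ (Finset.sum_congr rfl fun i _ => sum_pi_insert_ite_eq_mul w ha i.2)

end InjectionSum

theorem wickProd_apply {n : ℕ} (x y : Finset (Fin n) → ℝ) (C : Finset (Fin n)) :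
    wickProd x y C = ∑ B ∈ C.powerset, x (C \ B) * y B := by
  have hsplit : ∀ A B : Finset (Fin n), A ∪ B = C ∧ Disjoint A B ↔ B ⊆ C ∧ A = C \ B :=
    fun A B => ⟨fun ⟨hC, hAB⟩ => ⟨hC ▸ Finset.subset_union_right,
        hC ▸ (Finset.union_sdiff_cancel_right hAB).symm⟩,
      fun ⟨hB, hA⟩ => hA ▸ ⟨Finset.sdiff_union_of_subset hB, Finset.sdiff_disjoint⟩⟩
  rw [wickProd, Finset.sum_comm, ← Finset.filter_subset_univ, Finset.sum_filter]
  simp only [hsplit, ite_and, Finset.sum_ite_irrel, Finset.sum_const_zero, Finset.sum_ite_eq',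
    Finset.mem_univ, if_true]

theorem wickProd_deltaC {n : ℕ} (x : Finset (Fin n) → ℝ) (d : ℕ → Fin n → ℝ) (r : ℕ)
    (C : Finset (Fin n)) :
    wickProd x (deltaC d r) C = ∑ i ∈ C, x (C.erase i) * d r i := by
  simp only [wickProd_apply, deltaC, Finset.mul_sum, mul_ite, mul_zero]
  rw [Finset.sum_comm]
  simp only [Finset.sum_ite_eq', Finset.mem_powerset, Finset.singleton_subset_iff,
    Finset.sdiff_singleton_eq_erase, Finset.sum_ite_mem, Finset.univ_inter]

theorem Ueuler_eq_factorial_mul_injectionSum {n : ℕ} (d : ℕ → Fin n → ℝ) (l k : ℕ)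
    (C : Finset (Fin n)) :
    Ueuler d l k C
      = k.factorial * if C.card = k then injectionSum d (Finset.Icc 1 l) C else 0 := by
  induction l generalizing k C with
  | zero =>
    obtain rfl | ⟨i, hi⟩ := C.eq_empty_or_nonempty
    · cases k <;> simp [Ueuler, injectionSum_empty]
    · have hC : C ≠ ∅ := Finset.nonempty_iff_ne_empty.1 ⟨i, hi⟩
      simp [Ueuler, hC, injectionSum_eq_zero_of_mem hi]
  | succ l ih =>
    cases k with
    | zero =>
      obtain rfl | hC := eq_or_ne C ∅
      · simp [Ueuler, injectionSum_empty]
      · simp [Ueuler, hC]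
    | succ k =>
      have hstep : Ueuler d (l + 1) (k + 1) C = Ueuler d l (k + 1) C
          + ((k : ℝ) + 1) * wickProd (Ueuler d l k) (deltaC d (l + 1)) C := rfl
      have hcard : ∀ i ∈ C, (C.erase i).card = k ↔ C.card = k + 1 := fun i hi => by
        rw [Finset.card_erase_of_mem hi]
        have := Finset.card_pos.2 ⟨i, hi⟩
        omega
      rw [hstep, wickProd_deltaC, ih, Finset.sum_congr rfl fun i _ => by rw [ih k (C.erase i)],
        ← Finset.insert_Icc_right_eq_Icc_add_one (by omega : 1 ≤ l + 1),
        injectionSum_insert d (by simp)]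
      by_cases hC : C.card = k + 1
      · rw [if_pos hC, if_pos hC, Nat.factorial_succ, mul_add, Finset.mul_sum, Finset.mul_sum]
        push_cast
        congr 1
        exact Finset.sum_congr rfl fun i hi => by rw [if_pos ((hcard i hi).2 hC)]; ring
      · rw [if_neg hC, if_neg hC, Finset.sum_eq_zero fun i hi => by
          rw [if_neg (mt (hcard i hi).1 hC), mul_zero, zero_mul]]
        simp

theorem injectionSum_Icc_eq_zero_of_le {n : ℕ} {d : ℕ → Fin n → ℝ}
    (hd : ∀ (r : ℕ) (i : Fin n), r < (i : ℕ) + 1 → d r i = 0) {l : ℕ} {C : Finset (Fin n)}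
    {i : Fin n} (hi : i ∈ C) (hli : l ≤ i) : injectionSum d (Finset.Icc 1 l) C = 0 :=
  injectionSum_eq_zero_of_mem hi fun r hr => hd r i (by simp at hr; omega)

/-- Indices `i : Fin n` stand for the 1-based variable index `i + 1`. -/
theorem stmt9_general {n : ℕ} (d : ℕ → Fin n → ℝ)
    (hd : ∀ (r : ℕ) (i : Fin n), r < (i : ℕ) + 1 → d r i = 0)
    (k l : ℕ) (C : Finset (Fin n)) :
    (1 / (k.factorial : ℝ)) * Ueuler d l k C
      = if C.card = k ∧ (∀ i ∈ C, (i : ℕ) < l) then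
          ∑ m ∈ C.pi (fun _ => Finset.Icc 1 l),
            (if (∀ (p : Fin n) (hp : p ∈ C) (q : Fin n) (hq : q ∈ C),
                  m p hp = m q hq → p = q)
             then ∏ p ∈ C.attach, d (m p.1 p.2) p.1 else 0)
        else 0 := by
  have hwalsh : (1 / (k.factorial : ℝ)) * Ueuler d l k C
      = if C.card = k ∧ (∀ i ∈ C, (i : ℕ) < l) then injectionSum d (Finset.Icc 1 l) C
        else 0 := by
    rw [Ueuler_eq_factorial_mul_injectionSum, one_div,
      inv_mul_cancel_left₀ (by positivity), ite_and]
    by_cases hlt : ∀ i ∈ C, (i : ℕ) < l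
    · simp only [if_pos hlt]
    · push Not at hlt
      obtain ⟨i, hi, hli⟩ := hlt
      simp only [injectionSum_Icc_eq_zero_of_le hd hi hli, ite_self]
  rw [hwalsh]
  -- the statement decides injectivity with a `Fin`-specific instance, hence `congr!`, not `rfl`
  unfold injectionSum injectionTerm
  congr!

/-- Walsh decomposition of the Euler scheme for Wick powers:
`(1/k!)U^{k,n}_l = Σ_{C ⊆ {1,…,l}, |C|=k} (Σ_{m:C→{1,…,l} injective} ∏_{p∈C} d^n_{m(p),p}) Ξ^n_C`.
Indices `i : Fin n` represent the (1-based) variable index `i+1`, so the hypothesis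
`d^n_{l,i} = 0` for `i > l` reads `(i:ℕ)+1 > r → d r i = 0`. -/
theorem stmt9 {n : ℕ} (d : ℕ → Fin n → ℝ)
    (hd : ∀ (r : ℕ) (i : Fin n), r < (i : ℕ) + 1 → d r i = 0)
    (k l : ℕ) (hl : l ≤ n) (C : Finset (Fin n)) :
    (1 / (k.factorial : ℝ)) * Ueuler d l k C
      = if C.card = k ∧ (∀ i ∈ C, (i : ℕ) < l) then
          ∑ m ∈ C.pi (fun _ => Finset.Icc 1 l),
            (if (∀ (p : Fin n) (hp : p ∈ C) (q : Fin n) (hq : q ∈ C),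
                  m p hp = m q hq → p = q)
             then ∏ p ∈ C.attach, d (m p.1 p.2) p.1 else 0)
        else 0 :=
  stmt9_general d hd k l C
end

section
/- For H ∈ (1/2,1), the Molchan–Golosov kernel coefficients satisfy b^n_{t,i} ≤ 2 c_H n^{−(1−H)} for all t ∈ [0,1] and i ∈ {1,…,⌊nt⌋}, where b^n_{t,i} = √n ∫_{(i−1)/n}^{i/n} z(⌊nt⌋/n, s) ds. -/
open MeasureTheory intervalIntegral

/-- The Molchan–Golosov normalizing constant
`c_H = √(2HΓ(3/2−H)/(Γ(H+1/2)Γ(2−2H)))`. -/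
noncomputable def cH (H : ℝ) : ℝ :=
  Real.sqrt (2 * H * Real.Gamma (3 / 2 - H) / (Real.Gamma (H + 1 / 2) * Real.Gamma (2 - 2 * H)))

/-- The Molchan–Golosov kernel
`z(t,s) = 1_{t≥s} c_H (H−1/2) s^{1/2−H} ∫_s^t u^{H−1/2}(u−s)^{H−3/2} du`. -/
noncomputable def zMG (H t s : ℝ) : ℝ :=
  if s ≤ t then
    cH H * (H - 1 / 2) * s ^ ((1 : ℝ) / 2 - H) *
      ∫ u in s..t, u ^ (H - 1 / 2) * (u - s) ^ (H - 3 / 2)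
  else 0

/-- The discretized kernel coefficient `b^n_{t,i} = √n ∫_{(i−1)/n}^{i/n} z(⌊nt⌋/n, s) ds`. -/
noncomputable def bMG (H : ℝ) (n : ℕ) (t : ℝ) (i : ℕ) : ℝ :=
  Real.sqrt n * ∫ s in (((i : ℝ) - 1) / n)..((i : ℝ) / n), zMG H ((⌊(n : ℝ) * t⌋₊ : ℝ) / n) s

/-! For `s ≤ T ≤ 1` the factor `u ^ (H - 1/2)` in the kernel is at most `1`, and the remaining
integral `∫_s^T (u - s) ^ (H - 3/2) du = (T - s) ^ (H - 1/2) / (H - 1/2)` cancels the factor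
`H - 1/2`, so `z(T, s) ≤ c_H s ^ (1/2 - H)`. Integrating over a cell of width `1/n` and using the
subadditivity of `x ↦ x ^ (3/2 - H)` gives `∫ z ≤ c_H n ^ (H - 3/2) / (3/2 - H)`; times `√n`
this is `c_H n ^ (H - 1) / (3/2 - H)`, and `3/2 - H > 1/2`. -/

lemma integral_mono_on_of_nonneg_right {f g : ℝ → ℝ} {a b : ℝ} (hab : a ≤ b)
    (hg : IntervalIntegrable g volume a b) (hg₀ : ∀ x ∈ Set.Icc a b, 0 ≤ g x)
    (hfg : ∀ x ∈ Set.Icc a b, f x ≤ g x) :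
    ∫ x in a..b, f x ≤ ∫ x in a..b, g x := by
  by_cases hf : IntervalIntegrable f volume a b
  · exact integral_mono_on hab hf hg hfg
  · -- a non-integrable `f` has integral `0`
    rw [integral_undef hf]
    exact integral_nonneg hab hg₀

lemma intervalIntegrable_sub_rpow {q s a b : ℝ} (hq : -1 < q) :
    IntervalIntegrable (fun u => (u - s) ^ q) volume a b := by
  simpa using (intervalIntegrable_rpow' (a := a - s) (b := b - s) hq).comp_sub_right s

lemma integral_sub_rpow {q s T : ℝ} (hq : -1 < q) :
    ∫ u in s..T, (u - s) ^ q = (T - s) ^ (q + 1) / (q + 1) := by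
  rw [integral_comp_sub_right (fun u => u ^ q), sub_self, integral_rpow (Or.inl hq),
    Real.zero_rpow (by linarith), sub_zero]

lemma integral_rpow_mul_sub_rpow_le {p q s T : ℝ} (hp : 0 ≤ p) (hq : -1 < q) (hs : 0 ≤ s)
    (hsT : s ≤ T) (hT : T ≤ 1) :
    ∫ u in s..T, u ^ p * (u - s) ^ q ≤ (T - s) ^ (q + 1) / (q + 1) := by
  rw [← integral_sub_rpow hq]
  refine integral_mono_on_of_nonneg_right hsT (intervalIntegrable_sub_rpow hq)
    (fun u hu => Real.rpow_nonneg (by linarith [hu.1]) _) fun u hu => ?_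
  exact mul_le_of_le_one_left (Real.rpow_nonneg (by linarith [hu.1]) _)
    (Real.rpow_le_one (hs.trans hu.1) (hu.2.trans hT) hp)

lemma zMG_le {H T s : ℝ} (hH : 1 / 2 < H) (hs : 0 ≤ s) (hT : T ≤ 1) :
    zMG H T s ≤ cH H * s ^ ((1 : ℝ) / 2 - H) := by
  have hcH : 0 ≤ cH H := Real.sqrt_nonneg _
  have hH₀ : 0 < H - 1 / 2 := by linarith
  unfold zMG
  split_ifs with hsT
  · have hinner := integral_rpow_mul_sub_rpow_le (p := H - 1 / 2) (q := H - 3 / 2) hH₀.le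
      (by linarith) hs hsT hT
    have hexp : H - 3 / 2 + 1 = H - 1 / 2 := by ring
    rw [hexp] at hinner
    calc cH H * (H - 1 / 2) * s ^ ((1 : ℝ) / 2 - H) *
          ∫ u in s..T, u ^ (H - 1 / 2) * (u - s) ^ (H - 3 / 2)
        ≤ cH H * (H - 1 / 2) * s ^ ((1 : ℝ) / 2 - H) *
            ((T - s) ^ (H - 1 / 2) / (H - 1 / 2)) := by
          gcongr
      _ = cH H * s ^ ((1 : ℝ) / 2 - H) * (T - s) ^ (H - 1 / 2) := by
          have : H * 2 - 1 ≠ 0 := (by linarith : (0 : ℝ) < H * 2 - 1).ne'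
          field_simp
      _ ≤ cH H * s ^ ((1 : ℝ) / 2 - H) :=
          mul_le_of_le_one_right (by positivity)
            (Real.rpow_le_one (by linarith) (by linarith) hH₀.le)
  · positivity

lemma rpow_sub_rpow_le_rpow_sub {x y p : ℝ} (hy : 0 ≤ y) (hyx : y ≤ x) (hp₀ : 0 ≤ p)
    (hp₁ : p ≤ 1) : x ^ p - y ^ p ≤ (x - y) ^ p := by
  have := Real.rpow_add_le_add_rpow (sub_nonneg.2 hyx) hy hp₀ hp₁
  rw [sub_add_cancel] at this
  linarith

lemma integral_rpow_le_rpow_sub {r a b : ℝ} (hr₁ : -1 < r) (hr₀ : r ≤ 0) (ha : 0 ≤ a)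
    (hab : a ≤ b) : ∫ x in a..b, x ^ r ≤ (b - a) ^ (r + 1) / (r + 1) := by
  rw [integral_rpow (Or.inl hr₁)]
  gcongr
  · linarith
  · exact rpow_sub_rpow_le_rpow_sub ha hab (by linarith) (by linarith)

lemma integral_zMG_le {H T a b : ℝ} (hH₁ : 1 / 2 < H) (hH₂ : H < 3 / 2) (hT : T ≤ 1)
    (ha : 0 ≤ a) (hab : a ≤ b) :
    ∫ s in a..b, zMG H T s ≤ cH H * ((b - a) ^ (3 / 2 - H) / (3 / 2 - H)) := by
  have hexp : (1 : ℝ) / 2 - H + 1 = 3 / 2 - H := by ring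
  calc _ ≤ ∫ s in a..b, cH H * s ^ ((1 : ℝ) / 2 - H) :=
        integral_mono_on_of_nonneg_right hab
          ((intervalIntegrable_rpow' (by linarith)).const_mul _)
          (fun s hs => mul_nonneg (Real.sqrt_nonneg _) (Real.rpow_nonneg (ha.trans hs.1) _))
          fun s hs => zMG_le hH₁ (ha.trans hs.1) hT
    _ ≤ cH H * ((b - a) ^ (3 / 2 - H) / (3 / 2 - H)) := by
        rw [intervalIntegral.integral_const_mul, ← hexp]
        exact mul_le_mul_of_nonneg_left
          (integral_rpow_le_rpow_sub (by linarith) (by linarith) ha hab) (Real.sqrt_nonneg _)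

theorem stmt12_general (H : ℝ) (hH : H ∈ Set.Ioo (1 / 2 : ℝ) 1) (n : ℕ) (hn : 1 ≤ n)
    (t : ℝ) (ht : t ∈ Set.Icc (0 : ℝ) 1) (i : ℕ) (hi1 : 1 ≤ i) :
    bMG H n t i ≤ 2 * cH H * (n : ℝ) ^ (-(1 - H)) := by
  obtain ⟨hH₁, hH₂⟩ := hH
  have hcH : 0 ≤ cH H := Real.sqrt_nonneg _
  have hn₀ : (0 : ℝ) < n := by exact_mod_cast hn
  have hT : (⌊(n : ℝ) * t⌋₊ : ℝ) / n ≤ 1 := by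
    rw [div_le_one hn₀]
    exact_mod_cast Nat.floor_le_of_le (mul_le_of_le_one_right hn₀.le ht.2)
  have hlo : 0 ≤ ((i : ℝ) - 1) / n := div_nonneg (by simpa using hi1) hn₀.le
  have hlohi : ((i : ℝ) - 1) / n ≤ (i : ℝ) / n := by gcongr; linarith
  have hwidth : (i : ℝ) / n - ((i : ℝ) - 1) / n = (n : ℝ)⁻¹ := by field_simp; ring
  have hint := integral_zMG_le hH₁ (by linarith) hT hlo hlohi
  rw [hwidth] at hint
  have hscale : Real.sqrt n * (n : ℝ)⁻¹ ^ (3 / 2 - H) = (n : ℝ) ^ (-(1 - H)) := by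
    rw [Real.sqrt_eq_rpow, Real.inv_rpow hn₀.le, ← Real.rpow_neg hn₀.le,
      ← Real.rpow_add hn₀]
    ring_nf
  calc bMG H n t i ≤ Real.sqrt n * (cH H * ((n : ℝ)⁻¹ ^ (3 / 2 - H) / (3 / 2 - H))) :=
        mul_le_mul_of_nonneg_left hint (Real.sqrt_nonneg _)
    _ = cH H * (n : ℝ) ^ (-(1 - H)) / (3 / 2 - H) := by rw [← hscale]; ring
    _ ≤ 2 * cH H * (n : ℝ) ^ (-(1 - H)) := by
        rw [div_le_iff₀ (by linarith)]
        nlinarith [mul_nonneg hcH (Real.rpow_nonneg hn₀.le (-(1 - H)))]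

/-- For `H ∈ (1/2,1)`, the Molchan–Golosov kernel coefficients satisfy
`b^n_{t,i} ≤ 2 c_H n^{−(1−H)}` for all `t ∈ [0,1]` and `i ∈ {1,…,⌊nt⌋}`. -/
theorem stmt12 (H : ℝ) (hH : H ∈ Set.Ioo (1 / 2 : ℝ) 1) (n : ℕ) (hn : 1 ≤ n)
    (t : ℝ) (ht : t ∈ Set.Icc (0 : ℝ) 1) (i : ℕ) (hi1 : 1 ≤ i) (hi2 : i ≤ ⌊(n : ℝ) * t⌋₊) :
    bMG H n t i ≤ 2 * cH H * (n : ℝ) ^ (-(1 - H)) :=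
  stmt12_general H hH n hn t ht i hi1
end
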